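/- Let 𝒴 ⊆ ℂⁿ be a p-dimensional subspace with Ritz values η₁ ≥ ⋯ ≥ η_p of A in 𝒴, assume η_p > λ_{p+1}, and let f : ℝ → ℝ satisfy |f(λ₁)| ≥ ⋯ ≥ |f(λ_p)| > ν_p where ν_p = max_{j ∈ {p+1, …, n}} |f(λⱼ)|. Let η'_p be the smallest (p-th largest) Ritz value of A in 𝒴' = f(A)𝒴, let y ∈ 𝒴 be a nonzero vector such that y' = f(A)y is a Ritz vector of A in 𝒴' associated with η'_p (i.e., y' ≠ 0, ρ(y') = η'_p, and Ay' − η'_p y' ⊥ 𝒴'), and assume λ_p > η'_p. Define y_p = Σ_{j=1}^{p} xⱼ(xⱼᴴy) and y° = f(λ_p) y_p + ν_p (y − y_p). Then λ_p > η'_p = ρ(y') ≥ ρ(y°) ≥ ρ(y) ≥ η_p > λ_{p+1} (in particular y° ≠ 0). -/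

import Mathlib

/-!
In the eigenbasis, `ρ(v) - μ` has the sign of `∑ⱼ (λⱼ - μ) |xⱼᴴv|²`, and the coefficients of
`y°` and `f(A)y` are those of `y` rescaled by `f(λ_p)` on the top `p` indices and `ν_p` below,
respectively by `f(λⱼ)`. Since `ρ(y) ≥ η_p > λ_{p+1}`, the bottom part of
`∑ⱼ (λⱼ - ρ(y)) |xⱼᴴy|²` is nonpositive, so its top part is nonnegative, and weighting the top
more than the bottom can only raise the Rayleigh quotient: `ρ(y) ≤ ρ(y°)`. Passing from `y°` to
`f(A)y` increases every top weight and decreases every bottom weight; with a shift `μ` between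
`λ_{p+1}` and `λ_p` every summand of `∑ⱼ (λⱼ - μ) wⱼ` then increases. Used with `μ = λ_{p+1}` this
gives `ρ(f(A)y) ≥ λ_{p+1}`, and then with `μ = ρ(f(A)y) < λ_p` it gives `ρ(y°) ≤ ρ(f(A)y)`.
-/

/-- The Rayleigh quotient `ρ(v) = (vᴴAv)/(vᴴv)` of the Hermitian matrix `A`. -/
noncomputable def rayleigh {n : ℕ} (A : Matrix (Fin n) (Fin n) ℂ)
    (v : EuclideanSpace ℂ (Fin n)) : ℝ :=
  ((inner ℂ v (Matrix.toEuclideanLin A v) : ℂ)).re / ‖v‖ ^ 2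

/-- The `i`-th largest Ritz value (1-indexed, `i ∈ {1, …, dim S}`) of the Hermitian
matrix `A` in the subspace `S`, characterized via the Courant–Fischer max-min
principle applied inside `S` (equivalently, the `i`-th largest eigenvalue of
`SᴴAS` for any orthonormal basis matrix `S`). -/
noncomputable def ritzValue {n : ℕ} (A : Matrix (Fin n) (Fin n) ℂ)
    (S : Submodule ℂ (EuclideanSpace ℂ (Fin n))) (i : ℕ) : ℝ :=
  sSup {r : ℝ | ∃ T : Submodule ℂ (EuclideanSpace ℂ (Fin n)), T ≤ S ∧
    Module.finrank ℂ T = i ∧ ∀ v ∈ T, v ≠ 0 → r ≤ rayleigh A v}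

/-- `f(A) = ∑ j, f(λ_j) x_j x_jᴴ` as a linear operator, for eigenvalues `lam`
and orthonormal eigenvectors `x` of `A`. -/
noncomputable def matFun {n : ℕ} (lam : Fin n → ℝ)
    (x : Fin n → EuclideanSpace ℂ (Fin n)) (f : ℝ → ℝ) :
    EuclideanSpace ℂ (Fin n) →ₗ[ℂ] EuclideanSpace ℂ (Fin n) :=
  ∑ j : Fin n, (f (lam j) : ℂ) • ((innerSL ℂ (x j)).toLinearMap.smulRight (x j))

/-- `y` is a Ritz vector of `A` in `S` associated with the Ritz value `η`:
`y ∈ S`, `y ≠ 0`, `ρ(y) = η` and `Ay − ηy ⊥ S`. -/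
def IsRitzVector {n : ℕ} (A : Matrix (Fin n) (Fin n) ℂ)
    (S : Submodule ℂ (EuclideanSpace ℂ (Fin n))) (η : ℝ)
    (y : EuclideanSpace ℂ (Fin n)) : Prop :=
  y ∈ S ∧ y ≠ 0 ∧ rayleigh A y = η ∧
    ∀ v ∈ S, (inner ℂ v (Matrix.toEuclideanLin A y - (η : ℂ) • y) : ℂ) = 0

open scoped InnerProductSpace ComplexConjugate
open Finset

namespace OrthonormalBasis

variable {ι 𝕜 E : Type*} [Fintype ι] [RCLike 𝕜] [NormedAddCommGroup E] [InnerProductSpace 𝕜 E]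

theorem inner_apply_of_apply_eq_smul (b : OrthonormalBasis ι 𝕜 E) {T : E →ₗ[𝕜] E} {a : ι → 𝕜}
    (hT : ∀ j, T (b j) = a j • b j) (k : ι) (v : E) :
    ⟪b k, T v⟫_𝕜 = a k * ⟪b k, v⟫_𝕜 := by
  have hTv : T v = ∑ j, (a j * ⟪b j, v⟫_𝕜) • b j := by
    conv_lhs => rw [← b.sum_repr' v]
    simp only [map_sum, map_smul, hT, smul_smul, mul_comm]
  rw [hTv, b.orthonormal.inner_right_fintype]

theorem re_inner_apply_self_of_apply_eq_smul (b : OrthonormalBasis ι 𝕜 E) {T : E →ₗ[𝕜] E}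
    {a : ι → ℝ} (hT : ∀ j, T (b j) = (a j : 𝕜) • b j) (v : E) :
    RCLike.re ⟪v, T v⟫_𝕜 = ∑ j, a j * ‖⟪b j, v⟫_𝕜‖ ^ 2 := by
  rw [← b.sum_inner_mul_inner v (T v), map_sum]
  refine sum_congr rfl fun j _ => ?_
  rw [b.inner_apply_of_apply_eq_smul hT, mul_left_comm, ← inner_conj_symm v (b j),
    RCLike.conj_mul, ← RCLike.ofReal_pow, RCLike.re_ofReal_mul, RCLike.ofReal_re]

theorem norm_sq_inner_smul_sum_add_smul_sub_sum [DecidableEq ι] (b : OrthonormalBasis ι 𝕜 E)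
    (S : Finset ι) (α β : ℝ) (y : E) (k : ι) :
    ‖⟪b k, (α : 𝕜) • ∑ j ∈ S, ⟪b j, y⟫_𝕜 • b j + (β : 𝕜) • (y - ∑ j ∈ S, ⟪b j, y⟫_𝕜 • b j)⟫_𝕜‖ ^ 2
      = (if k ∈ S then α ^ 2 else β ^ 2) * ‖⟪b k, y⟫_𝕜‖ ^ 2 := by
  simp only [inner_add_right, inner_smul_right, inner_sub_right]
  by_cases hk : k ∈ S
  · rw [b.orthonormal.inner_right_sum _ hk, if_pos hk]
    simp [mul_pow]
  · rw [inner_sum, sum_eq_zero fun j hj => by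
      rw [inner_smul_right, b.orthonormal.inner_eq_zero (ne_of_mem_of_not_mem hj hk).symm,
        mul_zero], if_neg hk]
    simp [mul_pow]

end OrthonormalBasis

theorem Orthonormal.exists_orthonormalBasis_coe_eq {ι 𝕜 E : Type*} [Fintype ι] [RCLike 𝕜]
    [NormedAddCommGroup E] [InnerProductSpace 𝕜 E] [FiniteDimensional 𝕜 E] {x : ι → E}
    (hx : Orthonormal 𝕜 x) (hcard : Fintype.card ι = Module.finrank 𝕜 E) :
    ∃ b : OrthonormalBasis ι 𝕜 E, ⇑b = x :=
  ⟨.mk hx (hx.linearIndependent.span_eq_top_of_card_eq_finrank' hcard).ge,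
    OrthonormalBasis.coe_mk _ _⟩

section WeightedSums

variable {ι : Type*} [Fintype ι] {lam : ι → ℝ} {μ : ℝ}

theorem sum_sub_mul_le_sum_sub_mul_of_crossing (S : Finset ι) {u v : ι → ℝ}
    (htop : ∀ j ∈ S, μ ≤ lam j ∧ u j ≤ v j) (hbot : ∀ j ∉ S, lam j ≤ μ ∧ v j ≤ u j) :
    ∑ j, (lam j - μ) * u j ≤ ∑ j, (lam j - μ) * v j := by
  refine sum_le_sum fun j _ => ?_
  by_cases hj : j ∈ S
  · obtain ⟨hlam, huv⟩ := htop j hj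
    exact mul_le_mul_of_nonneg_left huv (sub_nonneg.2 hlam)
  · obtain ⟨hlam, hvu⟩ := hbot j hj
    exact mul_le_mul_of_nonpos_left hvu (sub_nonpos.2 hlam)

theorem sum_sub_mul_ite_mul_nonneg [DecidableEq ι] (S : Finset ι) {w : ι → ℝ} {α β : ℝ}
    (hbot : ∀ j ∉ S, lam j ≤ μ) (hw : ∀ j, 0 ≤ w j) (hβ : 0 ≤ β) (hβα : β ≤ α)
    (h : 0 ≤ ∑ j, (lam j - μ) * w j) :
    0 ≤ ∑ j, (lam j - μ) * ((if j ∈ S then α else β) * w j) := by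
  set g := fun j => (lam j - μ) * w j
  have hSc : ∑ j ∈ Sᶜ, g j ≤ 0 := sum_nonpos fun j hj =>
    mul_nonpos_of_nonpos_of_nonneg (sub_nonpos.2 (hbot j (mem_compl.1 hj))) (hw j)
  have hsplit : ∑ j, (lam j - μ) * ((if j ∈ S then α else β) * w j) =
      α * ∑ j ∈ S, g j + β * ∑ j ∈ Sᶜ, g j := by
    rw [← sum_add_sum_compl S, mul_sum, mul_sum]
    congr 1 <;> refine sum_congr rfl fun j hj => ?_
    · rw [if_pos hj]; ring
    · rw [if_neg (mem_compl.1 hj)]; ring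
  -- `α T + β B = (α - β) T + β (T + B)`, where `T + B ≥ 0` and `B ≤ 0` force `T ≥ 0`
  have hS := sum_add_sum_compl S g
  rw [hsplit]
  nlinarith

end WeightedSums

section Rayleigh

variable {ι : Type*} [Fintype ι] {n : ℕ} {A : Matrix (Fin n) (Fin n) ℂ} {lam : ι → ℝ}
  (b : OrthonormalBasis ι ℂ (EuclideanSpace ℂ (Fin n)))

theorem rayleigh_sub_mul_norm_sq (heig : ∀ j, Matrix.toEuclideanLin A (b j) = (lam j : ℂ) • b j)
    (v : EuclideanSpace ℂ (Fin n)) (μ : ℝ) :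
    (rayleigh A v - μ) * ‖v‖ ^ 2 = ∑ j, (lam j - μ) * ‖⟪b j, v⟫_ℂ‖ ^ 2 := by
  have hρ : rayleigh A v * ‖v‖ ^ 2 = (⟪v, Matrix.toEuclideanLin A v⟫_ℂ).re :=
    div_mul_cancel_of_imp fun hv => by simp [norm_eq_zero.1 (pow_eq_zero_iff two_ne_zero |>.1 hv)]
  simp only [sub_mul, sum_sub_distrib, ← mul_sum, b.sum_sq_norm_inner_right, hρ]
  rw [← b.re_inner_apply_self_of_apply_eq_smul heig]
  rfl

theorem le_rayleigh_iff (heig : ∀ j, Matrix.toEuclideanLin A (b j) = (lam j : ℂ) • b j)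
    {v : EuclideanSpace ℂ (Fin n)} (hv : v ≠ 0) (μ : ℝ) :
    μ ≤ rayleigh A v ↔ 0 ≤ ∑ j, (lam j - μ) * ‖⟪b j, v⟫_ℂ‖ ^ 2 := by
  rw [← rayleigh_sub_mul_norm_sq b heig, mul_nonneg_iff_of_pos_right (by positivity), sub_nonneg]

theorem rayleigh_le_iff (heig : ∀ j, Matrix.toEuclideanLin A (b j) = (lam j : ℂ) • b j)
    {v : EuclideanSpace ℂ (Fin n)} (hv : v ≠ 0) (μ : ℝ) :
    rayleigh A v ≤ μ ↔ ∑ j, (lam j - μ) * ‖⟪b j, v⟫_ℂ‖ ^ 2 ≤ 0 := by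
  rw [← rayleigh_sub_mul_norm_sq b heig, ← zero_mul (‖v‖ ^ 2),
    mul_le_mul_iff_of_pos_right (by positivity), sub_nonpos]

theorem exists_inner_ne_zero_of_lt_rayleigh
    (heig : ∀ j, Matrix.toEuclideanLin A (b j) = (lam j : ℂ) • b j)
    {v : EuclideanSpace ℂ (Fin n)} (hv : v ≠ 0) {μ : ℝ} (hμ : μ < rayleigh A v) :
    ∃ j, μ < lam j ∧ ⟪b j, v⟫_ℂ ≠ 0 := by
  by_contra! h
  refine hμ.not_ge ((rayleigh_le_iff b heig hv μ).2 (sum_nonpos fun j _ => ?_))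
  rcases le_or_gt (lam j) μ with hj | hj
  · exact mul_nonpos_of_nonpos_of_nonneg (sub_nonpos.2 hj) (by positivity)
  · simp [h j hj]

theorem ritzValue_le_rayleigh (heig : ∀ j, Matrix.toEuclideanLin A (b j) = (lam j : ℂ) • b j)
    {Y : Submodule ℂ (EuclideanSpace ℂ (Fin n))} {v : EuclideanSpace ℂ (Fin n)}
    (hvY : v ∈ Y) (hv : v ≠ 0) :
    ritzValue A Y (Module.finrank ℂ Y) ≤ rayleigh A v := by
  obtain ⟨μ, hμ⟩ := (Set.finite_range lam).bddBelow
  refine csSup_le ⟨μ, Y, le_rfl, rfl, fun u _ hu => (le_rayleigh_iff b heig hu μ).2 ?_⟩ ?_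
  · exact sum_nonneg fun j _ =>
      mul_nonneg (sub_nonneg.2 (hμ (Set.mem_range_self j))) (by positivity)
  · rintro r ⟨T, hTY, hT, hr⟩
    exact hr v (Submodule.eq_of_le_of_finrank_eq hTY hT ▸ hvY) hv

theorem ne_zero_of_norm_sq_inner_eq_ite
    (heig : ∀ j, Matrix.toEuclideanLin A (b j) = (lam j : ℂ) • b j) [DecidableEq ι]
    (S : Finset ι) {u v : EuclideanSpace ℂ (Fin n)} (hu : u ≠ 0) {α β μ : ℝ} (hα : 0 < α)
    (hw : ∀ j, ‖⟪b j, v⟫_ℂ‖ ^ 2 = (if j ∈ S then α else β) * ‖⟪b j, u⟫_ℂ‖ ^ 2)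
    (hbot : ∀ j ∉ S, lam j ≤ μ) (hμ : μ < rayleigh A u) :
    v ≠ 0 := by
  obtain ⟨j, hj, huj⟩ := exists_inner_ne_zero_of_lt_rayleigh b heig hu hμ
  have hjS : j ∈ S := by_contra fun hjS => (hbot j hjS).not_gt hj
  have hvj : 0 < ‖⟪b j, v⟫_ℂ‖ ^ 2 := by
    rw [hw, if_pos hjS]
    exact mul_pos hα (by positivity)
  rintro rfl
  simp at hvj

theorem rayleigh_le_rayleigh_of_norm_sq_inner_eq_ite
    (heig : ∀ j, Matrix.toEuclideanLin A (b j) = (lam j : ℂ) • b j) [DecidableEq ι]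
    (S : Finset ι) {u v : EuclideanSpace ℂ (Fin n)} (hu : u ≠ 0) (hv : v ≠ 0) {α β : ℝ}
    (hβ : 0 ≤ β) (hβα : β ≤ α)
    (hw : ∀ j, ‖⟪b j, v⟫_ℂ‖ ^ 2 = (if j ∈ S then α else β) * ‖⟪b j, u⟫_ℂ‖ ^ 2)
    (hbot : ∀ j ∉ S, lam j ≤ rayleigh A u) :
    rayleigh A u ≤ rayleigh A v := by
  rw [le_rayleigh_iff b heig hv]
  simp only [hw]
  exact sum_sub_mul_ite_mul_nonneg S hbot (fun j => by positivity) hβ hβα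
    ((le_rayleigh_iff b heig hu _).1 le_rfl)

theorem rayleigh_le_rayleigh_of_crossing
    (heig : ∀ j, Matrix.toEuclideanLin A (b j) = (lam j : ℂ) • b j)
    (S : Finset ι) {u v : EuclideanSpace ℂ (Fin n)} (hu : u ≠ 0) (hv : v ≠ 0) {μ ν : ℝ}
    (hlam_top : ∀ j ∈ S, ν ≤ lam j) (hlam_bot : ∀ j ∉ S, lam j ≤ μ)
    (hw_top : ∀ j ∈ S, ‖⟪b j, u⟫_ℂ‖ ^ 2 ≤ ‖⟪b j, v⟫_ℂ‖ ^ 2)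
    (hw_bot : ∀ j ∉ S, ‖⟪b j, v⟫_ℂ‖ ^ 2 ≤ ‖⟪b j, u⟫_ℂ‖ ^ 2)
    (hμν : μ ≤ ν) (hμ : μ ≤ rayleigh A u) (hν : rayleigh A v ≤ ν) :
    rayleigh A u ≤ rayleigh A v := by
  have hμv : μ ≤ rayleigh A v := by
    rw [le_rayleigh_iff b heig hv]
    exact ((le_rayleigh_iff b heig hu μ).1 hμ).trans <| sum_sub_mul_le_sum_sub_mul_of_crossing S
      (fun j hj => ⟨hμν.trans (hlam_top j hj), hw_top j hj⟩)
      (fun j hj => ⟨hlam_bot j hj, hw_bot j hj⟩)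
  rw [rayleigh_le_iff b heig hu]
  exact (sum_sub_mul_le_sum_sub_mul_of_crossing S
    (fun j hj => ⟨hν.trans (hlam_top j hj), hw_top j hj⟩)
    (fun j hj => ⟨(hlam_bot j hj).trans hμv, hw_bot j hj⟩)).trans
    ((rayleigh_le_iff b heig hv _).1 le_rfl)

end Rayleigh

theorem matFun_apply_of_orthonormal {n : ℕ} {x : Fin n → EuclideanSpace ℂ (Fin n)}
    (hx : Orthonormal ℂ x) (lam : Fin n → ℝ) (f : ℝ → ℝ) (k : Fin n) :
    matFun lam x f (x k) = (f (lam k) : ℂ) • x k := by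
  simp [matFun, orthonormal_iff_ite.1 hx]

theorem norm_sq_inner_matFun {n : ℕ} (b : OrthonormalBasis (Fin n) ℂ (EuclideanSpace ℂ (Fin n)))
    (lam : Fin n → ℝ) (f : ℝ → ℝ) (v : EuclideanSpace ℂ (Fin n)) (k : Fin n) :
    ‖⟪b k, matFun lam b f v⟫_ℂ‖ ^ 2 = f (lam k) ^ 2 * ‖⟪b k, v⟫_ℂ‖ ^ 2 := by
  rw [b.inner_apply_of_apply_eq_smul (matFun_apply_of_orthonormal b.orthonormal lam f)]
  simp [mul_pow]

/-- Under `η_p > λ_{p+1}` and `|f(λ₁)| ≥ ⋯ ≥ |f(λ_p)| > ν_p`,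
for a Ritz vector `y' = f(A)y` associated with the smallest Ritz value `η'_p` of
`A` in `𝒴' = f(A)𝒴` with `λ_p > η'_p`, the auxiliary vector
`y° = f(λ_p) y_p + ν_p (y − y_p)` satisfies
`λ_p > η'_p = ρ(y') ≥ ρ(y°) ≥ ρ(y) ≥ η_p > λ_{p+1}` (in particular `y° ≠ 0`).
(0-indexed: `lam ⟨j⟩` is `λ_{j+1}`.) -/
theorem stmt4 {n p : ℕ} (hpn : p < n)
    (A : Matrix (Fin n) (Fin n) ℂ)
    (lam : Fin n → ℝ) (hlam : Antitone lam)
    (x : Fin n → EuclideanSpace ℂ (Fin n)) (hx : Orthonormal ℂ x)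
    (heig : ∀ j, Matrix.toEuclideanLin A (x j) = (lam j : ℂ) • x j)
    (Y : Submodule ℂ (EuclideanSpace ℂ (Fin n))) (hY : Module.finrank ℂ Y = p)
    (hηp : lam ⟨p, hpn⟩ < ritzValue A Y p)
    (f : ℝ → ℝ) (νp : ℝ)
    (hνp : IsGreatest ((fun j => |f (lam j)|) '' {j : Fin n | p ≤ (j : ℕ)}) νp)
    (hmono : ∀ j k : Fin n, (j : ℕ) ≤ (k : ℕ) → (k : ℕ) < p →
      |f (lam k)| ≤ |f (lam j)|)
    (hgt : νp < |f (lam ⟨p - 1, by omega⟩)|)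
    (y : EuclideanSpace ℂ (Fin n)) (hyY : y ∈ Y) (hy0 : y ≠ 0)
    (hRitz : IsRitzVector A (Y.map (matFun lam x f))
      (ritzValue A (Y.map (matFun lam x f)) p) (matFun lam x f y))
    (hlt : ritzValue A (Y.map (matFun lam x f)) p < lam ⟨p - 1, by omega⟩)
    (yp yo : EuclideanSpace ℂ (Fin n))
    (hyp : yp = ∑ j ∈ Finset.univ.filter (fun j : Fin n => (j : ℕ) < p),
      (inner ℂ (x j) y : ℂ) • x j)
    (hyo : yo = (f (lam ⟨p - 1, by omega⟩) : ℂ) • yp + (νp : ℂ) • (y - yp)) :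
    ritzValue A (Y.map (matFun lam x f)) p < lam ⟨p - 1, by omega⟩ ∧
    ritzValue A (Y.map (matFun lam x f)) p = rayleigh A (matFun lam x f y) ∧
    rayleigh A yo ≤ rayleigh A (matFun lam x f y) ∧
    rayleigh A y ≤ rayleigh A yo ∧
    ritzValue A Y p ≤ rayleigh A y ∧
    lam ⟨p, hpn⟩ < ritzValue A Y p ∧
    yo ≠ 0 := by
  obtain ⟨b, rfl⟩ := hx.exists_orthonormalBasis_coe_eq (by simp)
  set S := univ.filter fun j : Fin n => (j : ℕ) < p
  set lp := lam ⟨p - 1, by omega⟩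
  have hS : ∀ j, j ∈ S ↔ (j : ℕ) < p := by simp [S]
  have hlam_top : ∀ j ∈ S, lp ≤ lam j := fun j hj => hlam (show (j : ℕ) ≤ p - 1 by grind)
  have hlam_bot : ∀ j ∉ S, lam j ≤ lam ⟨p, hpn⟩ := fun j hj => hlam (show p ≤ (j : ℕ) by grind)
  have hνp_nonneg : 0 ≤ νp := by
    obtain ⟨j, -, rfl⟩ := hνp.1
    exact abs_nonneg _
  have hf_gap : νp ^ 2 < f lp ^ 2 := sq_lt_sq.2 (by rwa [abs_of_nonneg hνp_nonneg])
  have hw_yo : ∀ j, ‖⟪b j, yo⟫_ℂ‖ ^ 2 = (if j ∈ S then f lp ^ 2 else νp ^ 2) * ‖⟪b j, y⟫_ℂ‖ ^ 2 :=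
    hyo ▸ hyp ▸ b.norm_sq_inner_smul_sum_add_smul_sub_sum S _ _ y
  have hηy : ritzValue A Y p ≤ rayleigh A y := hY ▸ ritzValue_le_rayleigh b heig hyY hy0
  have hyo0 : yo ≠ 0 := ne_zero_of_norm_sq_inner_eq_ite b heig S hy0
    ((sq_nonneg νp).trans_lt hf_gap) hw_yo hlam_bot (hηp.trans_le hηy)
  have hρyo : rayleigh A y ≤ rayleigh A yo :=
    rayleigh_le_rayleigh_of_norm_sq_inner_eq_ite b heig S hy0 hyo0 (sq_nonneg νp) hf_gap.le hw_yo
      fun j hj => (hlam_bot j hj).trans (hηp.trans_le hηy).le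
  refine ⟨hlt, hRitz.2.2.1.symm, ?_, hρyo, hηy, hηp, hyo0⟩
  refine rayleigh_le_rayleigh_of_crossing b heig S hyo0 hRitz.2.1 hlam_top hlam_bot
    (fun j hj => ?_) (fun j hj => ?_) (hlam (show p - 1 ≤ p by omega))
    (hηp.le.trans (hηy.trans hρyo)) (hRitz.2.2.1 ▸ hlt.le)
  · rw [hw_yo, norm_sq_inner_matFun, if_pos hj]
    exact mul_le_mul_of_nonneg_right (sq_le_sq.2 (hmono _ _ (by grind) (by grind)))
      (by positivity)
  · rw [hw_yo, norm_sq_inner_matFun, if_neg hj]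
    refine mul_le_mul_of_nonneg_right (sq_le_sq.2 ?_) (by positivity)
    rw [abs_of_nonneg hνp_nonneg]
    exact hνp.2 ⟨j, by grind, rfl⟩
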